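/- arXiv:1403.4153 — 5 statements merged into one kernel-verified Lean document; each statement's English description precedes it below -/
import Mathlib

section
/- In a group G with elements g1, gj, gj1 satisfying gj * g1 = g1⁻¹ * gj, gj1 * gj = g1 * gj * gj1, and g1 central among {g1, gj1} (i.e., g1 commutes with gj1), for all integers a, b we have gj1^a * gj^b = g1^(a·b') * gj^b * gj1^a, where b' = b mod 2 ∈ {0,1}. -/
/-!
Conjugation by `gj1` fixes `g1` and sends `gj` to `g1 * gj`, so conjugation by `gj1 ^ a` sends
`gj` to `g1 ^ a * gj` and `gj ^ b` to `(g1 ^ a * gj) ^ b`. Since `gj` inverts `g1`, it also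
inverts `g1 ^ a`, and whenever `y` inverts `x` we have `(x * y) ^ 2 = y ^ 2`; hence
`(x * y) ^ b = x ^ (b % 2) * y ^ b`.
-/

section

variable {G : Type*} [Group G] {x y z : G}

theorem mul_sq_eq_sq_of_semiconjBy_inv (h : SemiconjBy y x x⁻¹) : (x * y) ^ 2 = y ^ 2 := by
  rw [sq, sq, mul_assoc, ← mul_assoc y, h.eq]
  group

theorem commute_sq_of_semiconjBy_inv (h : SemiconjBy y x x⁻¹) : Commute x (y ^ 2) := by
  have h' : SemiconjBy y x⁻¹ x := by simpa using h.inv_right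
  rw [sq]
  exact (h'.mul_left h).symm

theorem mul_zpow_of_semiconjBy_inv (h : SemiconjBy y x x⁻¹) (b : ℤ) :
    (x * y) ^ b = x ^ (b % 2) * y ^ b := by
  obtain ⟨k, r, hr, rfl⟩ : ∃ k r : ℤ, (r = 0 ∨ r = 1) ∧ b = 2 * k + r :=
    ⟨b / 2, b % 2, Int.emod_two_eq b, (Int.mul_ediv_add_emod b 2).symm⟩
  have h_even : (x * y) ^ (2 * k) = y ^ (2 * k) := by
    simp only [zpow_mul, zpow_two, ← sq, mul_sq_eq_sq_of_semiconjBy_inv h]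
  have h_comm : Commute x (y ^ (2 * k)) := by
    simpa [zpow_mul] using (commute_sq_of_semiconjBy_inv h).zpow_right k
  rcases hr with rfl | rfl
  · simp [h_even]
  · rw [show (2 * k + 1) % 2 = 1 by omega, zpow_add, h_even, zpow_add, zpow_one, zpow_one,
      zpow_one, ← mul_assoc, ← h_comm.eq, mul_assoc]

theorem semiconjBy_zpow_of_commute (h : SemiconjBy z y (x * y)) (hxz : Commute x z) (a : ℤ) :
    SemiconjBy (z ^ a) y (x ^ a * y) := by
  have h_inv : SemiconjBy z⁻¹ y (x⁻¹ * y) := by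
    simpa using SemiconjBy.mul_right hxz.inv_inv.symm h.inv_symm_left
  induction a using Int.induction_on with
  | zero => simp
  | succ n ih =>
    have := (SemiconjBy.mul_right (hxz.zpow_right n).symm ih).mul_left h
    rwa [← mul_assoc, mul_self_zpow, ← zpow_add_one] at this
  | pred n ih =>
    have := (SemiconjBy.mul_right (hxz.inv_left.zpow_right (-n)).symm ih).mul_left h_inv
    rwa [← mul_assoc, ← zpow_sub_one, ← zpow_neg_one, ← zpow_add, neg_add_eq_sub] at this

end

theorem stmt1 {G : Type*} [Group G] (g1 gj gj1 : G)
    (h1 : gj * g1 = g1⁻¹ * gj) (h2 : gj1 * gj = g1 * gj * gj1)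
    (h3 : g1 * gj1 = gj1 * g1) :
    ∀ a b : ℤ, gj1 ^ a * gj ^ b = g1 ^ (a * (b % 2)) * gj ^ b * gj1 ^ a := by
  intro a b
  have h_conj : SemiconjBy (gj1 ^ a) (gj ^ b) ((g1 ^ a * gj) ^ b) :=
    (semiconjBy_zpow_of_commute (x := g1) h2 h3 a).zpow_right b
  have h_inv : SemiconjBy gj (g1 ^ a) (g1 ^ a)⁻¹ := by
    simpa only [inv_zpow] using SemiconjBy.zpow_right (x := g1) h1 a
  rw [h_conj.eq, mul_zpow_of_semiconjBy_inv h_inv, zpow_mul]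
end

section
/- An instance SSP'({k₁,...,kₙ}, M) (find xᵢ ∈ {-1,0,1} with Σ kᵢxᵢ = M) has a solution if and only if the twisted subset sum instance TSSP({0,k₁,0,k₂,...,0,kₙ}, M) has a solution, where TSSP({c₁,...,c_{2n}}, M) asks for x₁,...,x_{2n} ∈ {0,1} with Σⱼ cⱼ xⱼ (-1)^(x₁+⋯+x_{j-1}) = M. -/
/-- `(-1)^m` for an integer `m`: `1` if `m` is even, `-1` if `m` is odd. -/
def eps (m : ℤ) : ℤ := if m % 2 = 0 then 1 else -1

/-!
Group the positions of the twisted instance in pairs `(2i, 2i+1)`: only the odd one carries a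
coefficient, so the pair contributes `k i * (y (2i+1) * (-1)^(y 0 + ⋯ + y (2i)))`, and the
bracket is a signed bit in `{-1, 0, 1}`. Conversely the even bit `y (2i)` is free to flip the
parity of the prefix, so any target in `{-1, 0, 1}` is realised pair by pair.
-/

open Finset

lemma eps_add_one (m : ℤ) : eps (m + 1) = -eps m := by
  unfold eps; split_ifs <;> omega

lemma eps_eq_one_or_eq_neg_one (m : ℤ) : eps m = 1 ∨ eps m = -1 := by
  unfold eps; split <;> simp

lemma mul_eps_mem_of_mem {b : ℤ} (m : ℤ) (hb : b ∈ ({0, 1} : Set ℤ)) :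
    b * eps m ∈ ({-1, 0, 1} : Set ℤ) := by
  rcases hb with rfl | rfl <;> rcases eps_eq_one_or_eq_neg_one m with h | h <;> simp [h]

lemma sum_range_two_mul {M : Type*} [AddCommMonoid M] (f : ℕ → M) (n : ℕ) :
    ∑ j ∈ range (2 * n), f j = ∑ i ∈ range n, (f (2 * i) + f (2 * i + 1)) := by
  induction n with
  | zero => simp
  | succ n ih =>
    rw [Nat.mul_succ, sum_range_succ, sum_range_succ, ih, sum_range_succ, add_assoc]

lemma exists_bits_mul_eps_eq (p x : ℤ) (hx : x ∈ ({-1, 0, 1} : Set ℤ)) :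
    ∃ a b : ℤ, a ∈ ({0, 1} : Set ℤ) ∧ b ∈ ({0, 1} : Set ℤ) ∧ b * eps (p + a) = x := by
  rcases eq_or_ne x 0 with rfl | hx0
  · exact ⟨0, 0, by simp, by simp, by simp⟩
  by_cases hp : eps p = x
  · exact ⟨0, 1, by simp, by simp, by simp [hp]⟩
  · refine ⟨1, 1, by simp, by simp, ?_⟩
    rw [one_mul, eps_add_one]
    simp only [Set.mem_insert_iff, Set.mem_singleton_iff] at hx
    rcases eps_eq_one_or_eq_neg_one p with h | h <;> omega

lemma exists_bits_mul_eps_prefix_eq (x : ℕ → ℤ) (n : ℕ)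
    (hx : ∀ i < n, x i ∈ ({-1, 0, 1} : Set ℤ)) :
    ∃ y : ℕ → ℤ, (∀ j < 2 * n, y j ∈ ({0, 1} : Set ℤ)) ∧
      ∀ i < n, y (2 * i + 1) * eps (∑ j ∈ range (2 * i + 1), y j) = x i := by
  induction n with
  | zero => exact ⟨0, by simp, by simp⟩
  | succ n ih =>
    obtain ⟨y, hy, hyx⟩ := ih fun i hi => hx i (by omega)
    obtain ⟨a, b, ha, hb, hab⟩ :=
      exists_bits_mul_eps_eq (∑ j ∈ range (2 * n), y j) (x n) (hx n (by omega))
    set y' : ℕ → ℤ := fun j => if j < 2 * n then y j else if j = 2 * n then a else b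
    have prefix_eq : ∀ m ≤ 2 * n, ∑ j ∈ range m, y' j = ∑ j ∈ range m, y j :=
      fun m hm => sum_congr rfl fun j hj => if_pos (by simp at hj; omega)
    refine ⟨y', fun j hj => ?_, fun i hi => ?_⟩
    · simp only [y']
      split_ifs with h₁ h₂
      exacts [hy j h₁, ha, hb]
    · rcases Nat.lt_succ_iff_lt_or_eq.mp hi with hi | rfl
      · rw [prefix_eq _ (by omega), ← hyx i hi]
        simp only [y', if_pos (show 2 * i + 1 < 2 * n by omega)]
      · rw [sum_range_succ, prefix_eq _ le_rfl, ← hab]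
        simp [y']

lemma sum_interleave_eq (n : ℕ) (k y : ℕ → ℤ) :
    ∑ j ∈ range (2 * n),
        (if j % 2 = 0 then 0 else k (j / 2)) * y j * eps (∑ i ∈ range j, y i) =
      ∑ i ∈ range n, k i * (y (2 * i + 1) * eps (∑ j ∈ range (2 * i + 1), y j)) := by
  rw [sum_range_two_mul]
  refine sum_congr rfl fun i _ => ?_
  rw [if_pos (by omega), if_neg (by omega), show (2 * i + 1) / 2 = i by omega]
  ring

theorem stmt7 (n : ℕ) (k : ℕ → ℤ) (M : ℤ) :
    (∃ x : ℕ → ℤ, (∀ i < n, x i ∈ ({-1, 0, 1} : Set ℤ)) ∧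
      ∑ i ∈ Finset.range n, k i * x i = M) ↔
    (∃ x : ℕ → ℤ, (∀ j < 2 * n, x j ∈ ({0, 1} : Set ℤ)) ∧
      ∑ j ∈ Finset.range (2 * n),
        (if j % 2 = 0 then 0 else k (j / 2)) * x j * eps (∑ i ∈ Finset.range j, x i) = M) := by
  simp only [sum_interleave_eq]
  constructor
  · rintro ⟨x, hx, rfl⟩
    obtain ⟨y, hy, hyx⟩ := exists_bits_mul_eps_prefix_eq x n hx
    exact ⟨y, hy, sum_congr rfl fun i hi => by rw [hyx i (mem_range.mp hi)]⟩
  · rintro ⟨y, hy, rfl⟩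
    exact ⟨fun i => y (2 * i + 1) * eps (∑ j ∈ range (2 * i + 1), y j),
      fun i hi => mul_eps_mem_of_mem _ (hy (2 * i + 1) (by omega)), rfl⟩
end

section
/- In the group G_n (iterated semidirect product of 2n+1 copies of ℤ with generators g₁,...,g_{2n+1} and relations: g_j g₁ = g₁⁻¹ g_j for even j, g_{j+1} g_j = g₁ g_j g_{j+1} for even j, all other pairs of generators commute), for all x₁,...,xₙ ∈ ℤ and k₁,...,kₙ ∈ ℤ: (g₂^{x₁} g₄^{x₂} ⋯ g_{2n}^{xₙ}) (g₃^{k₁} g₅^{k₂} ⋯ g_{2n+1}^{kₙ}) (g₂^{x₁} ⋯ g_{2n}^{xₙ})⁻¹ = g₁^{-p} g₃^{k₁} ⋯ g_{2n+1}^{kₙ}, where p = Σᵢ kᵢ xᵢ' (-1)^{x₁+⋯+x_{i-1}} and xᵢ' = xᵢ mod 2 ∈ {0,1}. -/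
/-- The defining relators of the group `Gₙ`: generators are indexed by `{1, …, 2n+1}`;
for even `j`, `g_j g₁ g_j⁻¹ = g₁⁻¹` and `g_{j+1} g_j g_{j+1}⁻¹ = g₁ g_j`;
all other pairs of generators commute. -/
def relsG (n : ℕ) : Set (FreeGroup {i : ℕ // 1 ≤ i ∧ i ≤ 2*n+1}) :=
  { w | (∃ j : {i : ℕ // 1 ≤ i ∧ i ≤ 2*n+1}, j.1 % 2 = 0 ∧
          w = FreeGroup.of j * FreeGroup.of ⟨1, by omega⟩ * (FreeGroup.of j)⁻¹ *
              FreeGroup.of ⟨1, by omega⟩) ∨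
        (∃ j j1 : {i : ℕ // 1 ≤ i ∧ i ≤ 2*n+1}, j.1 % 2 = 0 ∧ j1.1 = j.1 + 1 ∧
          w = FreeGroup.of j1 * FreeGroup.of j * (FreeGroup.of j1)⁻¹ *
              (FreeGroup.of ⟨1, by omega⟩ * FreeGroup.of j)⁻¹) ∨
        (∃ a b : {i : ℕ // 1 ≤ i ∧ i ≤ 2*n+1},
          ¬ ((a.1 = 1 ∧ b.1 % 2 = 0) ∨ (b.1 = 1 ∧ a.1 % 2 = 0) ∨
             (b.1 % 2 = 0 ∧ a.1 = b.1 + 1) ∨ (a.1 % 2 = 0 ∧ b.1 = a.1 + 1)) ∧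
          w = FreeGroup.of a * FreeGroup.of b * (FreeGroup.of a)⁻¹ * (FreeGroup.of b)⁻¹) }

/-- The polycyclic group `Gₙ` of Hirsch length `2n+1`. -/
abbrev Gn (n : ℕ) := PresentedGroup (relsG n)

/-- The generator `g_i` of `Gₙ` (1-based index, `1 ≤ i ≤ 2n+1`). -/
def gg (n : ℕ) (i : ℕ) : Gn n :=
  if h : 1 ≤ i ∧ i ≤ 2*n+1 then PresentedGroup.of ⟨i, h⟩ else 1

/-! Write `z = g₁`, `aᵢ = g_{2i+2}`, `bᵢ = g_{2i+3}`. Conjugation by `aᵢ` inverts `z` and sends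
`bᵢ` to `z⁻¹ bᵢ`, so `aᵢ²` centralises both and `aᵢ^x` acts like `aᵢ^(x mod 2)`: it sends `z` to
`z^((-1)^x)` and `bᵢ^k` to `z^(-k x') bᵢ^k`. Since `aᵢ` commutes with `bⱼ` for `j ≠ i` and `z` with
every `bⱼ`, induction on the number of factors peels off the last pair; conjugating its
contribution `z^(-kₘ xₘ')` by the earlier `a`'s gives the sign `(-1)^(x₁ + ⋯ + x_{m-1})`.
Only these relations are used, so the identity holds in any group satisfying them. -/

open Finset

theorem eps_add (a b : ℤ) : eps (a + b) = eps a * eps b := by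
  unfold eps
  split_ifs <;> omega

section Conjugation

variable {G : Type*} [Group G]

theorem conj_eq_inv_mul_of_conj_eq_mul {a b z : G} (h : b * a * b⁻¹ = z * a) :
    a * b * a⁻¹ = z⁻¹ * b := by
  obtain rfl : z = b * a * b⁻¹ * a⁻¹ := by rw [h]; group
  group

theorem commute_sq_of_conj_conj {a y : G} (h : a * (a * y * a⁻¹) * a⁻¹ = y) :
    Commute (a ^ 2) y := by
  rw [commute_iff_eq, ← mul_inv_eq_iff_eq_mul, pow_two]
  conv_rhs => rw [← h]
  group

theorem zpow_conj_eq_emod_two_conj {a y : G} (h : Commute (a ^ 2) y) (x : ℤ) :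
    a ^ x * y * (a ^ x)⁻¹ = a ^ (x % 2) * y * (a ^ (x % 2))⁻¹ := by
  have hx : a ^ x = a ^ (x % 2) * (a ^ 2) ^ (x / 2) := by
    rw [← zpow_natCast, ← zpow_mul, ← zpow_add, Nat.cast_ofNat, Int.emod_add_mul_ediv]
  have hy : (a ^ 2) ^ (x / 2) * y * ((a ^ 2) ^ (x / 2))⁻¹ = y := by
    rw [(h.zpow_left _).eq, mul_inv_cancel_right]
  calc a ^ x * y * (a ^ x)⁻¹
      = a ^ (x % 2) * ((a ^ 2) ^ (x / 2) * y * ((a ^ 2) ^ (x / 2))⁻¹) * (a ^ (x % 2))⁻¹ := by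
        rw [hx]; group
    _ = a ^ (x % 2) * y * (a ^ (x % 2))⁻¹ := by rw [hy]

theorem zpow_conj_of_conj_eq_inv {a z : G} (hz : a * z * a⁻¹ = z⁻¹) (x : ℤ) :
    a ^ x * z * (a ^ x)⁻¹ = z ^ eps x := by
  have hsq : Commute (a ^ 2) z := commute_sq_of_conj_conj <| by
    rw [hz, show a * z⁻¹ * a⁻¹ = (a * z * a⁻¹)⁻¹ by group, hz, inv_inv]
  rw [zpow_conj_eq_emod_two_conj hsq]
  rcases Int.emod_two_eq_zero_or_one x with hx | hx <;> simp [eps, hx, hz]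

theorem zpow_conj_zpow_of_conj_eq_inv_mul {a b z : G} (hz : a * z * a⁻¹ = z⁻¹)
    (hb : a * b * a⁻¹ = z⁻¹ * b) (hzb : Commute z b) (x k : ℤ) :
    a ^ x * b ^ k * (a ^ x)⁻¹ = z ^ (-(k * (x % 2))) * b ^ k := by
  have hsq : Commute (a ^ 2) b := commute_sq_of_conj_conj <| by
    rw [hb, show a * (z⁻¹ * b) * a⁻¹ = (a * z * a⁻¹)⁻¹ * (a * b * a⁻¹) by group, hz, hb,
      inv_inv, mul_inv_cancel_left]
  have hconj : a ^ x * b * (a ^ x)⁻¹ = z ^ (-(x % 2)) * b := by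
    rw [zpow_conj_eq_emod_two_conj hsq]
    rcases Int.emod_two_eq_zero_or_one x with hx | hx <;> simp [hx, hb]
  rw [← conj_zpow, hconj, (hzb.zpow_left _).mul_zpow, ← zpow_mul, mul_comm, mul_neg]

def prodZPow (a : ℕ → G) (x : ℕ → ℤ) (m : ℕ) : G :=
  ((List.range m).map fun i => a i ^ x i).prod

theorem prodZPow_succ (a : ℕ → G) (x : ℕ → ℤ) (m : ℕ) :
    prodZPow a x (m + 1) = prodZPow a x m * a m ^ x m :=
  List.prod_range_succ _ _

theorem Commute.prodZPow_right {y : G} {a : ℕ → G} (x : ℕ → ℤ) {m : ℕ}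
    (h : ∀ i < m, Commute y (a i)) : Commute y (prodZPow a x m) :=
  Commute.list_prod_right _ _ <| by
    simp only [List.mem_map, List.mem_range, forall_exists_index, and_imp]
    rintro _ i hi rfl
    exact (h i hi).zpow_right _

theorem prodZPow_conj_of_conj_eq_inv {a : ℕ → G} {z : G} (x : ℕ → ℤ) {m : ℕ}
    (hz : ∀ i < m, a i * z * (a i)⁻¹ = z⁻¹) :
    prodZPow a x m * z * (prodZPow a x m)⁻¹ = z ^ eps (∑ i ∈ range m, x i) := by
  induction m with
  | zero => simp [prodZPow, eps]
  | succ m ih =>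
    rw [prodZPow_succ, sum_range_succ, eps_add, zpow_mul, ← ih fun i hi => hz i (by omega),
      conj_zpow, ← zpow_conj_of_conj_eq_inv (hz m (by omega))]
    group

theorem prodZPow_conj_prodZPow {a b : ℕ → G} {z : G} (x k : ℕ → ℤ) {m : ℕ}
    (hz : ∀ i < m, a i * z * (a i)⁻¹ = z⁻¹) (hb : ∀ i < m, a i * b i * (a i)⁻¹ = z⁻¹ * b i)
    (hzb : ∀ i < m, Commute z (b i)) (hab : ∀ i < m, ∀ j < m, i ≠ j → Commute (a i) (b j)) :
    prodZPow a x m * prodZPow b k m * (prodZPow a x m)⁻¹ =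
      z ^ (-∑ i ∈ range m, k i * (x i % 2) * eps (∑ j ∈ range i, x j)) * prodZPow b k m := by
  induction m with
  | zero => simp [prodZPow]
  | succ m ih =>
    set A := prodZPow a x m
    set B := prodZPow b k m
    set c := a m ^ x m
    set d := b m ^ k m
    set q := k m * (x m % 2)
    have hcB : Commute c B := (Commute.prodZPow_right k fun i hi =>
      hab m (by omega) i (by omega) (by omega)).zpow_left _
    have hAd : Commute A d := ((Commute.prodZPow_right x fun i hi =>
      (hab i (by omega) m (by omega) (by omega)).symm).zpow_left _).symm
    have hzB : Commute (z ^ (-q * eps (∑ j ∈ range m, x j))) B :=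
      (Commute.prodZPow_right k fun i hi => hzb i (by omega)).zpow_left _
    have hcd : c * d * c⁻¹ = z ^ (-q) * d :=
      zpow_conj_zpow_of_conj_eq_inv_mul (hz m (by omega)) (hb m (by omega)) (hzb m (by omega)) _ _
    have hAz : A * z ^ (-q) * A⁻¹ = z ^ (-q * eps (∑ j ∈ range m, x j)) := by
      rw [← conj_zpow, prodZPow_conj_of_conj_eq_inv x fun i hi => hz i (by omega), ← zpow_mul,
        mul_comm]
    rw [prodZPow_succ, prodZPow_succ]
    calc A * c * (B * d) * (A * c)⁻¹
        = A * (c * B) * d * c⁻¹ * A⁻¹ := by group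
      _ = (A * B * A⁻¹) * (A * (c * d * c⁻¹) * A⁻¹) := by rw [hcB.eq]; group
      _ = z ^ (-∑ i ∈ range m, k i * (x i % 2) * eps (∑ j ∈ range i, x j)) * B *
            (A * z ^ (-q) * A⁻¹) * (A * d * A⁻¹) := by
        rw [ih (fun i hi => hz i (by omega)) (fun i hi => hb i (by omega))
          (fun i hi => hzb i (by omega)) (fun i hi j hj => hab i (by omega) j (by omega)), hcd]
        group
      _ = z ^ (-∑ i ∈ range m, k i * (x i % 2) * eps (∑ j ∈ range i, x j)) *
            z ^ (-q * eps (∑ j ∈ range m, x j)) * (B * d) := by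
        rw [hAz, hAd.eq, mul_inv_cancel_right, mul_assoc _ B, ← hzB.eq]; group
      _ = z ^ (-∑ i ∈ range (m + 1), k i * (x i % 2) * eps (∑ j ∈ range i, x j)) * (B * d) := by
        rw [← zpow_add, sum_range_succ, neg_add, neg_mul]

end Conjugation

theorem gg_eq_of {n i : ℕ} (h : 1 ≤ i ∧ i ≤ 2 * n + 1) : gg n i = PresentedGroup.of ⟨i, h⟩ :=
  dif_pos h

theorem gg_conj_gg_one {n j : ℕ} (hj : 1 ≤ j ∧ j ≤ 2 * n + 1) (heven : j % 2 = 0) :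
    gg n j * gg n 1 * (gg n j)⁻¹ = (gg n 1)⁻¹ := by
  have h := PresentedGroup.one_of_mem (rels := relsG n) (Or.inl ⟨⟨j, hj⟩, heven, rfl⟩)
  simp only [map_mul, map_inv] at h
  rw [gg_eq_of hj, gg_eq_of (by omega)]
  exact mul_eq_one_iff_eq_inv.mp h

theorem gg_succ_conj_gg {n j : ℕ} (hj : 1 ≤ j ∧ j + 1 ≤ 2 * n + 1) (heven : j % 2 = 0) :
    gg n (j + 1) * gg n j * (gg n (j + 1))⁻¹ = gg n 1 * gg n j := by
  have h := PresentedGroup.one_of_mem (rels := relsG n)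
    (Or.inr (Or.inl ⟨⟨j, by omega⟩, ⟨j + 1, by omega⟩, heven, rfl, rfl⟩))
  simp only [map_mul, map_inv] at h
  rw [gg_eq_of (by omega), gg_eq_of (by omega), gg_eq_of (by omega)]
  exact mul_inv_eq_one.mp h

theorem commute_gg {n i j : ℕ} (hi : 1 ≤ i ∧ i ≤ 2 * n + 1) (hj : 1 ≤ j ∧ j ≤ 2 * n + 1)
    (h : ¬ ((i = 1 ∧ j % 2 = 0) ∨ (j = 1 ∧ i % 2 = 0) ∨
      (j % 2 = 0 ∧ i = j + 1) ∨ (i % 2 = 0 ∧ j = i + 1))) :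
    Commute (gg n i) (gg n j) := by
  have hrel := PresentedGroup.one_of_mem (rels := relsG n)
    (Or.inr (Or.inr ⟨⟨i, hi⟩, ⟨j, hj⟩, h, rfl⟩))
  simp only [map_mul, map_inv] at hrel
  rw [gg_eq_of hi, gg_eq_of hj]
  exact commutatorElement_eq_one_iff_commute.mp hrel

theorem stmt9 (n : ℕ) (x k : ℕ → ℤ) :
    ((List.range n).map (fun i => gg n (2*i+2) ^ x i)).prod *
      ((List.range n).map (fun i => gg n (2*i+3) ^ k i)).prod *
      (((List.range n).map (fun i => gg n (2*i+2) ^ x i)).prod)⁻¹ =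
    gg n 1 ^ (-(∑ i ∈ Finset.range n, k i * (x i % 2) * eps (∑ j ∈ Finset.range i, x j))) *
      ((List.range n).map (fun i => gg n (2*i+3) ^ k i)).prod :=
  prodZPow_conj_prodZPow x k
    (fun i hi => gg_conj_gg_one (by omega) (by omega))
    (fun i hi => conj_eq_inv_mul_of_conj_eq_mul (gg_succ_conj_gg (by omega) (by omega)))
    (fun i hi => commute_gg (by omega) (by omega) (by omega))
    (fun i hi j hj hij => commute_gg (by omega) (by omega) (by omega))
end

section
/- In the group G_n, for even j, conjugation by g_j^k sends g₁^{k₁} ⋯ g_{2n+1}^{k_{2n+1}} to g₁^{k₁(-1)^k + k_{j+1}k'(-1)^{k₂+k₄+⋯+k_j+k}} g₂^{k₂} ⋯ g_{2n+1}^{k_{2n+1}}, where k' = k mod 2. -/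
/-!
Every element `x` of `Gₙ` normalises `⟨g₁⟩`: `x g₁ x⁻¹ = g₁ ^ sign x`, where the character
`sign : Gₙ →* ℤˣ` sends the even generators to `-1` and the odd ones to `1`. Conjugation by `g_j ^ k`
fixes every generator except `g₁ ↦ g₁ ^ (-1)^k` and `g_{j+1} ↦ g₁ ^ (-k') g_{j+1}`. Moving the
stray power of `g₁` to the front past `g₂^{k₂} ⋯ g_j^{k_j}` multiplies its exponent by
`sign (g₂^{k₂} ⋯ g_j^{k_j}) = (-1)^{k₂ + k₄ + ⋯ + k_j}`.
-/

open Finset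

theorem zpow_conj_eq_zpow_emod_two_mul {G : Type*} [Group G] {x y z : G}
    (hz : x * z * x⁻¹ = z⁻¹) (hy : x * y * x⁻¹ = z * y) (k : ℤ) :
    x ^ k * y * (x ^ k)⁻¹ = z ^ (k % 2) * y := by
  have hz' : x⁻¹ * z * x = z⁻¹ := by
    simpa [mul_assoc] using (congrArg (fun w => x⁻¹ * w⁻¹ * x) hz).symm
  have hy' : x⁻¹ * y * x = z * y := by
    calc x⁻¹ * y * x = (x⁻¹ * z * x)⁻¹ * (x⁻¹ * (z * y) * x) := by group
      _ = (x⁻¹ * z * x)⁻¹ * y := by rw [← hy]; group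
      _ = z * y := by rw [hz', inv_inv]
  induction k using Int.induction_on with
  | zero => simp
  | succ k ih =>
    calc x ^ ((k : ℤ) + 1) * y * (x ^ ((k : ℤ) + 1))⁻¹
        = x * (x ^ (k : ℤ) * y * (x ^ (k : ℤ))⁻¹) * x⁻¹ := by group
      _ = (x * z * x⁻¹) ^ ((k : ℤ) % 2) * (x * y * x⁻¹) := by rw [ih, conj_zpow]; group
      _ = z ^ (((k : ℤ) + 1) % 2) * y := by
        rw [hz, hy, inv_zpow', ← mul_assoc, ← zpow_add_one]; congr 2; omega
  | pred k ih =>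
    calc x ^ (-(k : ℤ) - 1) * y * (x ^ (-(k : ℤ) - 1))⁻¹
        = x⁻¹ * (x ^ (-(k : ℤ)) * y * (x ^ (-(k : ℤ)))⁻¹) * x := by group
      _ = (x⁻¹ * z * x) ^ (-(k : ℤ) % 2) * (x⁻¹ * y * x) := by
        have h := conj_zpow (a := x⁻¹) (b := z) (i := -(k : ℤ) % 2)
        rw [inv_inv] at h
        rw [ih, h]; group
      _ = z ^ ((-(k : ℤ) - 1) % 2) * y := by
        rw [hz', hy', inv_zpow', ← mul_assoc, ← zpow_add_one]; congr 2; omega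

theorem prod_map_range_add {M : Type*} [Monoid M] (f : ℕ → M) (a b : ℕ) :
    ((List.range (a + b)).map f).prod =
      ((List.range a).map f).prod * ((List.range b).map fun i => f (a + i)).prod := by
  rw [List.range_add, List.map_append, List.prod_append, List.map_map]
  rfl

theorem commute_prod_map_range {M : Type*} [Monoid M] {c : M} {f : ℕ → M} {m : ℕ}
    (h : ∀ i < m, Commute c (f i)) : Commute c ((List.range m).map f).prod :=
  Commute.list_prod_right _ _ <| by simpa using h

theorem eps_eq_negOnePow (m : ℤ) : eps m = m.negOnePow := by
  unfold eps
  split_ifs with h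
  · simp [Int.negOnePow_even m (Int.even_iff.mpr h)]
  · simp [Int.negOnePow_odd m (Int.odd_iff.mpr (by omega))]

theorem emod_two_mul_negOnePow (k : ℤ) : k % 2 * (k.negOnePow : ℤ) = -(k % 2) := by
  rcases Int.emod_two_eq_zero_or_one k with h | h
  · simp [h]
  · simp [h, Int.negOnePow_odd k (Int.odd_iff.mpr h)]

namespace Gn

variable {n : ℕ}

theorem gg_eq_of {i : ℕ} (h : 1 ≤ i ∧ i ≤ 2 * n + 1) : gg n i = PresentedGroup.of ⟨i, h⟩ :=
  dif_pos h

theorem gg_eq_one {i : ℕ} (h : ¬ (1 ≤ i ∧ i ≤ 2 * n + 1)) : gg n i = 1 :=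
  dif_neg h

theorem commute_gg {a b : ℕ}
    (h : ¬ ((a = 1 ∧ b % 2 = 0) ∨ (b = 1 ∧ a % 2 = 0) ∨
      (b % 2 = 0 ∧ a = b + 1) ∨ (a % 2 = 0 ∧ b = a + 1))) :
    Commute (gg n a) (gg n b) := by
  by_cases ha : 1 ≤ a ∧ a ≤ 2 * n + 1
  · by_cases hb : 1 ≤ b ∧ b ≤ 2 * n + 1
    · have hab := PresentedGroup.one_of_mem (rels := relsG n)
        (Or.inr <| Or.inr ⟨⟨a, ha⟩, ⟨b, hb⟩, h, rfl⟩)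
      simp only [map_mul, map_inv] at hab
      rw [gg_eq_of ha, gg_eq_of hb]
      exact commutatorElement_eq_one_iff_commute.mp hab
    · rw [gg_eq_one hb]; exact Commute.one_right _
  · rw [gg_eq_one ha]; exact Commute.one_left _

theorem commute_gg_one_of_odd {i : ℕ} (hi : i % 2 = 1) : Commute (gg n i) (gg n 1) :=
  commute_gg (by omega)

theorem commute_gg_of_even {i j : ℕ} (hj : j % 2 = 0) (hi1 : i ≠ 1) (hij : i ≠ j + 1) :
    Commute (gg n j) (gg n i) :=
  commute_gg (by omega)

def sign (n : ℕ) : Gn n →* ℤˣ :=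
  PresentedGroup.toGroup (f := fun i => if i.1 % 2 = 0 then -1 else 1) <| by
    rintro r (⟨j, hj, rfl⟩ | ⟨j, j1, hj, hj1, rfl⟩ | ⟨a, b, -, rfl⟩)
    · simp [hj]
    · have : (j.1 + 1) % 2 ≠ 0 := by omega
      simp [hj, hj1, this]
    · simp only [map_mul, map_inv]
      exact commutatorElement_eq_one_iff_commute.mpr (Commute.all _ _)

theorem sign_gg_of_odd {i : ℕ} (hi : i % 2 = 1) : sign n (gg n i) = 1 := by
  by_cases h : 1 ≤ i ∧ i ≤ 2 * n + 1
  · rw [gg_eq_of h, sign, PresentedGroup.toGroup.of, if_neg (by simp [hi])]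
  · rw [gg_eq_one h, map_one]

section Even

variable {j : ℕ} (hj : j % 2 = 0) (hj1 : 0 < j) (hj2 : j ≤ 2 * n)
include hj hj1 hj2

theorem conj_gg_one_of_even : gg n j * gg n 1 * (gg n j)⁻¹ = (gg n 1)⁻¹ := by
  have h := PresentedGroup.one_of_mem (rels := relsG n) (Or.inl ⟨⟨j, by omega⟩, hj, rfl⟩)
  simp only [map_mul, map_inv] at h
  rw [gg_eq_of (by omega), gg_eq_of (by omega)]
  exact eq_inv_of_mul_eq_one_left h

theorem conj_gg_of_even_by_succ : gg n (j + 1) * gg n j * (gg n (j + 1))⁻¹ = gg n 1 * gg n j := by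
  have h := PresentedGroup.one_of_mem (rels := relsG n)
    (Or.inr <| Or.inl ⟨⟨j, by omega⟩, ⟨j + 1, by omega⟩, hj, rfl, rfl⟩)
  simp only [map_mul, map_inv] at h
  rw [gg_eq_of (by omega), gg_eq_of (by omega), gg_eq_of (by omega)]
  exact mul_inv_eq_one.mp h

theorem sign_gg_of_even : sign n (gg n j) = -1 := by
  rw [gg_eq_of (by omega), sign, PresentedGroup.toGroup.of, if_pos hj]

theorem sign_zpow_gg_of_even (k : ℤ) : sign n (gg n j ^ k) = k.negOnePow := by
  rw [map_zpow, sign_gg_of_even hj hj1 hj2, Int.negOnePow_def]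

theorem conj_zpow_gg_succ_of_even (k m : ℤ) :
    gg n j ^ k * gg n (j + 1) ^ m * (gg n j ^ k)⁻¹ =
      gg n 1 ^ (-(k % 2 * m)) * gg n (j + 1) ^ m := by
  have hz : gg n j * (gg n 1)⁻¹ * (gg n j)⁻¹ = (gg n 1)⁻¹⁻¹ := by
    rw [← conj_inv, conj_gg_one_of_even hj hj1 hj2]
  have hy : gg n j * gg n (j + 1) * (gg n j)⁻¹ = (gg n 1)⁻¹ * gg n (j + 1) := by
    calc gg n j * gg n (j + 1) * (gg n j)⁻¹
        = (gg n 1)⁻¹ * (gg n 1 * gg n j) * gg n (j + 1) * (gg n j)⁻¹ := by group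
      _ = (gg n 1)⁻¹ * (gg n (j + 1) * gg n j * (gg n (j + 1))⁻¹) * gg n (j + 1) *
            (gg n j)⁻¹ := by rw [conj_gg_of_even_by_succ hj hj1 hj2]
      _ = (gg n 1)⁻¹ * gg n (j + 1) := by group
  have hc : Commute ((gg n 1)⁻¹ ^ (k % 2)) (gg n (j + 1)) :=
    ((commute_gg_one_of_odd (by omega)).symm.inv_left).zpow_left _
  rw [← conj_zpow, zpow_conj_eq_zpow_emod_two_mul hz hy, hc.mul_zpow, ← zpow_mul, inv_zpow']

end Even

theorem conj_zpow_gg_one (x : Gn n) (s : ℤ) :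
    x * gg n 1 ^ s * x⁻¹ = gg n 1 ^ (s * (sign n x : ℤ)) := by
  suffices h : ∀ s : ℤ, x * gg n 1 ^ s * x⁻¹ = gg n 1 ^ (s * (sign n x : ℤ)) from h s
  have hx : x ∈ Subgroup.closure (Set.range PresentedGroup.of) := by
    rw [PresentedGroup.closure_range_of]; exact Subgroup.mem_top x
  induction hx using Subgroup.closure_induction with
  | mem x hx =>
    obtain ⟨⟨i, hi⟩, rfl⟩ := hx
    intro s
    rw [← gg_eq_of hi, ← conj_zpow]
    rcases Nat.mod_two_eq_zero_or_one i with he | ho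
    · rw [conj_gg_one_of_even he (by omega) (by omega), sign_gg_of_even he (by omega) (by omega),
        inv_zpow', Units.val_neg, Units.val_one, mul_neg_one]
    · rw [(commute_gg_one_of_odd ho).eq, mul_inv_cancel_right, sign_gg_of_odd ho, Units.val_one,
        mul_one]
  | one => simp
  | mul x y _ _ hx hy =>
    intro s
    rw [mul_inv_rev, map_mul, Units.val_mul, ← mul_assoc, mul_assoc x, mul_assoc x, hy,
      ← mul_assoc, hx]
    ring_nf
  | inv x _ hx =>
    intro s
    rw [map_inv, Int.units_inv_eq_self]
    calc x⁻¹ * gg n 1 ^ s * x⁻¹⁻¹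
        = x⁻¹ * (x * gg n 1 ^ (s * (sign n x : ℤ)) * x⁻¹) * x := by
          rw [hx, mul_assoc s, ← Units.val_mul, Int.units_mul_self, Units.val_one, mul_one,
            inv_inv]
      _ = gg n 1 ^ (s * (sign n x : ℤ)) := by group

theorem zpow_gg_one_mul (x : Gn n) (s : ℤ) :
    x * gg n 1 ^ s = gg n 1 ^ (s * (sign n x : ℤ)) * x := by
  rw [← conj_zpow_gg_one, inv_mul_cancel_right]

theorem sign_prod_range_two_mul_add_one (ks : ℕ → ℤ) {t : ℕ} (ht : t < n) :
    sign n ((List.range (2 * t + 1)).map fun i => gg n (i + 2) ^ ks (i + 2)).prod =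
      (∑ i ∈ range (t + 1), ks (2 * i + 2)).negOnePow := by
  induction t with
  | zero => simp [sign_zpow_gg_of_even (n := n) (j := 2) rfl two_pos (by omega)]
  | succ t ih =>
    rw [show 2 * (t + 1) + 1 = 2 * t + 1 + 1 + 1 by ring, List.prod_range_succ,
      List.prod_range_succ, map_mul, map_mul, ih (by omega), map_zpow,
      sign_gg_of_odd (by omega), one_zpow, mul_one,
      sign_zpow_gg_of_even (by omega) (by omega) (by omega), Finset.sum_range_succ (n := t + 1),
      Int.negOnePow_add]
    rfl

theorem conj_zpow_gg_prod_range (ks : ℕ → ℤ) {t : ℕ} (ht : t < n) (k : ℤ) :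
    gg n (2 * t + 2) ^ k * ((List.range (2 * n)).map fun i => gg n (i + 2) ^ ks (i + 2)).prod *
        (gg n (2 * t + 2) ^ k)⁻¹ =
      gg n 1 ^ (-(k % 2 * ks (2 * t + 3)) * (∑ i ∈ range (t + 1), ks (2 * i + 2)).negOnePow) *
        ((List.range (2 * n)).map fun i => gg n (i + 2) ^ ks (i + 2)).prod := by
  set c := gg n (2 * t + 2) ^ k
  set y := gg n (2 * t + 3) ^ ks (2 * t + 3)
  set A := ((List.range (2 * t + 1)).map fun i => gg n (i + 2) ^ ks (i + 2)).prod
  obtain ⟨r, hr⟩ : ∃ r, 2 * n = 2 * t + 1 + (r + 1) := ⟨2 * n - (2 * t + 2), by omega⟩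
  set B := ((List.range r).map
    fun i => gg n (2 * t + 1 + (i + 1) + 2) ^ ks (2 * t + 1 + (i + 1) + 2)).prod
  have hsplit : ((List.range (2 * n)).map fun i => gg n (i + 2) ^ ks (i + 2)).prod =
      A * (y * B) := by
    rw [show List.range (2 * n) = List.range (2 * t + 1 + (r + 1)) by rw [hr],
      prod_map_range_add, List.prod_range_succ' _ r]
  have hA : c * A * c⁻¹ = A := (commute_prod_map_range fun i _ =>
    (commute_gg_of_even (by omega) (by omega) (by omega)).zpow_zpow _ _).mul_inv_cancel
  have hB : c * B * c⁻¹ = B := (commute_prod_map_range fun i _ =>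
    (commute_gg_of_even (by omega) (by omega) (by omega)).zpow_zpow _ _).mul_inv_cancel
  calc c * ((List.range (2 * n)).map fun i => gg n (i + 2) ^ ks (i + 2)).prod * c⁻¹
      = (c * A * c⁻¹) * (c * y * c⁻¹) * (c * B * c⁻¹) := by rw [hsplit]; group
    _ = A * (gg n 1 ^ (-(k % 2 * ks (2 * t + 3))) * y) * B := by
      rw [hA, hB, conj_zpow_gg_succ_of_even (j := 2 * t + 2) (by omega) (by omega) (by omega)]
    _ = _ := by
      rw [← mul_assoc A, zpow_gg_one_mul, sign_prod_range_two_mul_add_one ks ht, hsplit]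
      simp only [mul_assoc]

end Gn

open Gn in
theorem stmt11 (n : ℕ) (j : ℕ) (hje : j % 2 = 0) (hj1 : 2 ≤ j) (hj2 : j ≤ 2*n)
    (kk : ℤ) (ks : ℕ → ℤ) :
    gg n j ^ kk * ((List.range (2*n+1)).map (fun i => gg n (i+1) ^ ks (i+1))).prod *
      (gg n j ^ kk)⁻¹ =
    gg n 1 ^ (ks 1 * eps kk +
        ks (j+1) * (kk % 2) * eps ((∑ i ∈ Finset.range (j/2), ks (2*i+2)) + kk)) *
      ((List.range (2*n)).map (fun i => gg n (i+2) ^ ks (i+2))).prod := by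
  obtain ⟨t, rfl⟩ : ∃ t, j = 2 * t + 2 := ⟨j / 2 - 1, by omega⟩
  set c := gg n (2 * t + 2) ^ kk
  set P := ((List.range (2 * n)).map fun i => gg n (i + 2) ^ ks (i + 2)).prod
  set S := ∑ i ∈ range (t + 1), ks (2 * i + 2)
  have hfirst : ((List.range (2 * n + 1)).map fun i => gg n (i + 1) ^ ks (i + 1)).prod =
      gg n 1 ^ ks 1 * P :=
    List.prod_range_succ' _ _
  calc c * ((List.range (2 * n + 1)).map fun i => gg n (i + 1) ^ ks (i + 1)).prod * c⁻¹
      = (c * gg n 1 ^ ks 1 * c⁻¹) * (c * P * c⁻¹) := by rw [hfirst]; group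
    _ = gg n 1 ^ (ks 1 * kk.negOnePow) *
          (gg n 1 ^ (-(kk % 2 * ks (2 * t + 3)) * S.negOnePow) * P) := by
      rw [conj_zpow_gg_one, sign_zpow_gg_of_even hje (by omega) hj2,
        conj_zpow_gg_prod_range ks (by omega)]
    _ = _ := by
      rw [← mul_assoc, ← zpow_add, show (2 * t + 2) / 2 = t + 1 by omega, eps_eq_negOnePow,
        eps_eq_negOnePow, Int.negOnePow_add, Units.val_mul]
      congr 2
      linear_combination (-ks (2 * t + 3) * S.negOnePow) * emod_two_mul_negOnePow kk
end

section
/- In the group G_n, if two normal-form elements u = g₁^{e₁}⋯g_{2n+1}^{e_{2n+1}} and v = g₁^{f₁}⋯g_{2n+1}^{f_{2n+1}} are conjugate, then eᵢ = fᵢ for all i ≥ 2. -/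
abbrev Idx (n : ℕ) := {i : ℕ // 1 ≤ i ∧ i ≤ 2*n+1}

def fmap (n : ℕ) : Idx n → Multiplicative (Idx n → ℤ) :=
  fun a => Multiplicative.ofAdd (if a.1 = 1 then 0 else Pi.single a 1)

lemma fmap_rels (n : ℕ) : ∀ r ∈ relsG n, FreeGroup.lift (fmap n) r = 1 := by
  intro r hr
  rcases hr with ⟨j, hj, rfl⟩ | ⟨j, j1, hj, hj1, rfl⟩ | ⟨a, b, hab, rfl⟩ <;>
    simp [fmap, mul_comm, mul_left_comm, mul_assoc]

def phi (n : ℕ) : Gn n →* Multiplicative (Idx n → ℤ) := PresentedGroup.toGroup (fmap_rels n)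

def psi (n : ℕ) (j : Idx n) : Gn n →* Multiplicative ℤ :=
  (AddMonoidHom.toMultiplicative (Pi.evalAddMonoidHom (fun _ : Idx n => ℤ) j)).comp (phi n)

lemma psi_gg (n : ℕ) (j : Idx n) (m : ℕ) (h : 1 ≤ m ∧ m ≤ 2*n+1) :
    Multiplicative.toAdd (psi n j (gg n m)) = if m = 1 then 0 else if m = j.1 then 1 else 0 := by
  simp only [psi, MonoidHom.comp_apply, gg, dif_pos h, phi, PresentedGroup.toGroup.of, fmap]
  by_cases hm : m = 1
  · simp [hm]
  · rw [if_neg hm]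
    simp only [AddMonoidHom.toMultiplicative_apply_apply, toAdd_ofAdd,
      Pi.evalAddMonoidHom_apply, if_neg hm]
    rw [Pi.single_apply]
    by_cases hj : m = j.1
    · rw [if_pos hj, if_pos (by ext; exact hj.symm)]
    · rw [if_neg hj, if_neg (fun hc => hj (congrArg Subtype.val hc).symm)]

lemma toAdd_list_prod {A : Type*} [AddCommMonoid A] (l : List (Multiplicative A)) :
    Multiplicative.toAdd l.prod = (l.map Multiplicative.toAdd).sum := by
  induction l with
  | nil => rfl
  | cons a t ih => simp [ih]

lemma eval_prod (n : ℕ) (e : ℕ → ℤ) (j : Idx n) (h2 : 2 ≤ j.1) :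
    Multiplicative.toAdd (psi n j (((List.range (2*n+1)).map (fun i => gg n (i+1) ^ e (i+1))).prod))
      = e j.1 := by
  rw [map_list_prod, List.map_map, toAdd_list_prod, List.map_map]
  have : ∀ i ∈ List.range (2*n+1),
      (Multiplicative.toAdd ∘ (psi n j) ∘ fun i => gg n (i+1) ^ e (i+1)) i
        = (fun i => if i + 1 = j.1 then e j.1 else 0) i := by
    intro i hi
    simp only [List.mem_range] at hi
    simp only [Function.comp_apply, map_zpow, toAdd_zpow,
      psi_gg n j (i+1) ⟨by omega, by omega⟩]
    by_cases hj : i + 1 = j.1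
    · rw [if_pos hj, if_neg (by omega), if_pos hj, hj]; simp
    · rw [if_neg hj]
      by_cases h1 : i + 1 = 1
      · rw [if_pos h1, if_neg (by omega)]; simp
      · rw [if_neg h1, if_neg hj]; simp
  rw [List.map_congr_left this]
  have hrange : ((List.range (2*n+1)).map (fun i => if i + 1 = j.1 then e j.1 else 0)).sum
      = ∑ x ∈ Finset.range (2*n+1), (fun i => if i + 1 = j.1 then e j.1 else 0) x := rfl
  rw [hrange]
  have hjm : j.1 - 1 ∈ Finset.range (2*n+1) := by
    simp only [Finset.mem_range]; omega
  rw [Finset.sum_eq_single_of_mem (j.1 - 1) hjm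
    (fun b _ hb => if_neg (by omega))]
  rw [if_pos (by omega)]

theorem stmt13 (n : ℕ) (e f : ℕ → ℤ)
    (h : IsConj (((List.range (2*n+1)).map (fun i => gg n (i+1) ^ e (i+1))).prod)
                (((List.range (2*n+1)).map (fun i => gg n (i+1) ^ f (i+1))).prod)) :
    ∀ i, 2 ≤ i → i ≤ 2*n+1 → e i = f i := by
  intro i hi2 hi3
  have hj : (1:ℕ) ≤ i ∧ i ≤ 2*n+1 := ⟨by omega, hi3⟩
  have hc : IsConj (psi n ⟨i, hj⟩ _) (psi n ⟨i, hj⟩ _) := (psi n ⟨i, hj⟩).map_isConj h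
  have heq := isConj_iff_eq.mp hc
  have := congrArg Multiplicative.toAdd heq
  rwa [eval_prod n e ⟨i, hj⟩ hi2, eval_prod n f ⟨i, hj⟩ hi2] at this
end
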